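/- arXiv:1211.1401 — 4 statements merged into one kernel-verified Lean document; each statement's English description precedes it below -/
import Mathlib

section
/- Assume that g_n^2 ≠ b_n for every n ≥ 1. Then the series Σ_{n≥1} G_n(t) sin(γ_n ξ) sin(γ_n x) converges uniformly on [0,l] × [0,l] × [0,∞); consequently the Green function G(x,ξ,t) is a continuous function of (x,ξ,t) on [0,l] × [0,l] × [0,∞). -/
/-!
Weierstrass M-test with majorant `1 / g_n`. In each of the three regimes `G_n` is bounded on
`[0, ∞)` by `1 / g_n`: in the oscillatory and critical ones because `|G_n(t)| ≤ t e^{-g_n t}`,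
in the overdamped one by writing `e^{-gt} sinh(ωt) = e^{-(g-ω)t} (1 - e^{-2ωt}) / 2`. Since
`g_n ≥ ε γ_n² / 2` grows like `n²`, the majorant is summable, and the partial sums, being
continuous, converge uniformly to a continuous limit.
-/

/-- γ_n = nπ/l -/
noncomputable def gamman (l : ℝ) (n : ℕ) : ℝ := n * Real.pi / l

/-- b_n = γ_n² + λ²/4 -/
noncomputable def bn (lm l : ℝ) (n : ℕ) : ℝ := (gamman l n) ^ 2 + lm ^ 2 / 4

/-- g_n = (α + ε b_n)/2 -/
noncomputable def gn (α ε lm l : ℝ) (n : ℕ) : ℝ := (α + ε * bn lm l n) / 2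

/-- G_n(t), defined by cases according to the sign of g_n² − b_n. -/
noncomputable def Gn (α ε lm l : ℝ) (n : ℕ) (t : ℝ) : ℝ :=
  if (gn α ε lm l n) ^ 2 > bn lm l n then
    Real.exp (-(gn α ε lm l n) * t) *
      Real.sinh (Real.sqrt ((gn α ε lm l n) ^ 2 - bn lm l n) * t) /
      Real.sqrt ((gn α ε lm l n) ^ 2 - bn lm l n)
  else if (gn α ε lm l n) ^ 2 = bn lm l n then
    t * Real.exp (-(gn α ε lm l n) * t)
  else
    Real.exp (-(gn α ε lm l n) * t) *
      Real.sin (Real.sqrt (bn lm l n - (gn α ε lm l n) ^ 2) * t) /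
      Real.sqrt (bn lm l n - (gn α ε lm l n) ^ 2)

/-- The Green function G(x,ξ,t) = (2/l) e^{λx/2} Σ_{n≥1} G_n(t) sin(γ_n ξ) sin(γ_n x). -/
noncomputable def GreenG (α ε lm l : ℝ) (x ξ t : ℝ) : ℝ :=
  (2 / l) * Real.exp (lm * x / 2) *
    ∑' n : ℕ, Gn α ε lm l (n + 1) t * Real.sin (gamman l (n + 1) * ξ) *
      Real.sin (gamman l (n + 1) * x)

/-- a_λ = α + ελ²/4 -/
noncomputable def alam (α ε lm : ℝ) : ℝ := α + ε * lm ^ 2 / 4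

/-- p_λ = π²/(επ² + a_λ l²) -/
noncomputable def plam (α ε lm l : ℝ) : ℝ :=
  Real.pi ^ 2 / (ε * Real.pi ^ 2 + alam α ε lm * l ^ 2)

/-- q_λ = (a_λ + ε(π/l)²)/2 -/
noncomputable def qlam (α ε lm l : ℝ) : ℝ :=
  (alam α ε lm + ε * (Real.pi / l) ^ 2) / 2

/-- δ = min(p_λ, q_λ) -/
noncomputable def dlt (α ε lm l : ℝ) : ℝ := min (plam α ε lm l) (qlam α ε lm l)

open Real

lemma mul_exp_neg_mul_le {a : ℝ} (ha : 0 < a) (t : ℝ) : t * exp (-a * t) ≤ exp (-1) / a := by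
  rw [le_div_iff₀ ha]
  calc t * exp (-a * t) * a = a * t * exp (-(a * t)) := by ring_nf
    _ ≤ exp (-1) := mul_exp_neg_le_exp_neg_one _

lemma exp_neg_one_le_half : exp (-1) ≤ 1 / 2 := by
  rw [exp_neg, inv_le_comm₀ (exp_pos 1) (by norm_num)]
  linarith [add_one_le_exp 1]

lemma mul_exp_neg_mul_le_inv {a : ℝ} (ha : 0 < a) (t : ℝ) : t * exp (-a * t) ≤ a⁻¹ :=
  calc t * exp (-a * t) ≤ exp (-1) / a := mul_exp_neg_mul_le ha t
    _ ≤ 1 / a := by gcongr; linarith [exp_neg_one_le_half]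
    _ = a⁻¹ := one_div a

lemma exp_neg_mul_mul_sinh_div_le {g ω t : ℝ} (hω : 0 < ω) (hωg : ω < g) (ht : 0 ≤ t) :
    exp (-g * t) * sinh (ω * t) / ω ≤ g⁻¹ := by
  have hg : 0 < g := hω.trans hωg
  have hsplit : exp (-g * t) * sinh (ω * t) =
      exp (-(g - ω) * t) * (1 - exp (-(2 * ω * t))) / 2 := by
    rw [sinh_eq, show -(g - ω) * t = -g * t + ω * t by ring,
      show -(2 * ω * t) = -(ω * t) + -(ω * t) by ring, exp_add, exp_add]
    field_simp
    rw [exp_neg]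
    field_simp
  have key : exp (-(g - ω) * t) * (1 - exp (-(2 * ω * t))) ≤ 2 * ω / g := by
    rcases le_or_gt g (2 * ω) with hlarge | hsmall
    · have hdecay : exp (-(g - ω) * t) ≤ 1 :=
        exp_le_one_iff.2 (by nlinarith [mul_nonneg (sub_pos.2 hωg).le ht])
      have hgap : 1 - exp (-(2 * ω * t)) ≤ 1 := by linarith [exp_pos (-(2 * ω * t))]
      calc exp (-(g - ω) * t) * (1 - exp (-(2 * ω * t))) ≤ 1 * 1 := by
            gcongr
            linarith [exp_le_one_iff.2 (neg_nonpos.2 (by positivity : 0 ≤ 2 * ω * t))]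
        _ ≤ 2 * ω / g := by rw [le_div_iff₀ hg]; linarith
    · -- the decay rate `g - ω` exceeds `g / 2`, which beats the factor `exp (-1) ≤ 1 / 2`
      have hlin : 1 - exp (-(2 * ω * t)) ≤ 2 * ω * t := by linarith [add_one_le_exp (-(2 * ω * t))]
      calc exp (-(g - ω) * t) * (1 - exp (-(2 * ω * t)))
          ≤ exp (-(g - ω) * t) * (2 * ω * t) := by gcongr
        _ = 2 * ω * (t * exp (-(g - ω) * t)) := by ring
        _ ≤ 2 * ω * (exp (-1) / (g - ω)) := by gcongr; exact mul_exp_neg_mul_le (by linarith) t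
        _ ≤ 2 * ω / g := by
            have : exp (-1) * g ≤ g - ω := by
              nlinarith [mul_le_mul_of_nonneg_right exp_neg_one_le_half hg.le]
            rw [← mul_div_assoc, div_le_div_iff₀ (by linarith) hg]
            nlinarith
  rw [hsplit]
  calc exp (-(g - ω) * t) * (1 - exp (-(2 * ω * t))) / 2 / ω ≤ 2 * ω / g / 2 / ω := by gcongr
    _ = g⁻¹ := by field_simp

lemma abs_exp_neg_mul_mul_sin_div_le {g ν t : ℝ} (hg : 0 < g) (ht : 0 ≤ t) :
    |exp (-g * t) * sin (ν * t) / ν| ≤ g⁻¹ := by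
  have hsin : |sin (ν * t) / ν| ≤ t := by
    rcases eq_or_ne ν 0 with rfl | hν
    · simpa using ht
    rw [abs_div, div_le_iff₀ (abs_pos.2 hν)]
    calc |sin (ν * t)| ≤ |ν * t| := abs_sin_le_abs
      _ = t * |ν| := by rw [abs_mul, abs_of_nonneg ht, mul_comm]
  calc |exp (-g * t) * sin (ν * t) / ν| = exp (-g * t) * |sin (ν * t) / ν| := by
        rw [mul_div_assoc, abs_mul, abs_of_pos (exp_pos _)]
    _ ≤ t * exp (-g * t) := by rw [mul_comm]; gcongr
    _ ≤ g⁻¹ := mul_exp_neg_mul_le_inv hg t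

lemma gamman_ne_zero {l : ℝ} (hl : l ≠ 0) {n : ℕ} (hn : n ≠ 0) : gamman l n ≠ 0 := by
  unfold gamman
  have := pi_pos.ne'
  positivity

lemma bn_pos {lm l : ℝ} (hl : l ≠ 0) {n : ℕ} (hn : n ≠ 0) : 0 < bn lm l n := by
  have := gamman_ne_zero hl hn
  unfold bn
  positivity

lemma eps_mul_sq_gamman_div_two_le_gn {α ε : ℝ} (hα : 0 ≤ α) (hε : 0 ≤ ε) (lm l : ℝ) (n : ℕ) :
    ε * gamman l n ^ 2 / 2 ≤ gn α ε lm l n := by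
  unfold gn bn
  have : 0 ≤ ε * (lm ^ 2 / 4) := by positivity
  linarith

lemma gn_pos {α ε : ℝ} (hα : 0 < α) (hε : 0 ≤ ε) (lm l : ℝ) (n : ℕ) : 0 < gn α ε lm l n := by
  unfold gn bn
  positivity

lemma summable_inv_gn_succ {α ε : ℝ} (hα : 0 < α) (hε : 0 < ε) (lm : ℝ) {l : ℝ} (hl : l ≠ 0) :
    Summable fun n : ℕ => (gn α ε lm l (n + 1))⁻¹ := by
  have hp : Summable fun n : ℕ => (((n + 1 : ℕ) : ℝ) ^ 2)⁻¹ :=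
    (summable_nat_add_iff 1).mpr (Real.summable_nat_pow_inv.mpr one_lt_two)
  refine Summable.of_nonneg_of_le (fun n => (inv_pos.2 (gn_pos hα hε.le lm l _)).le)
    (fun n => ?_) (hp.mul_left (2 * l ^ 2 / (ε * π ^ 2)))
  have hγ := gamman_ne_zero hl (Nat.succ_ne_zero n)
  calc (gn α ε lm l (n + 1))⁻¹ ≤ (ε * gamman l (n + 1) ^ 2 / 2)⁻¹ :=
        inv_anti₀ (by positivity) (eps_mul_sq_gamman_div_two_le_gn hα.le hε.le lm l _)
    _ = 2 * l ^ 2 / (ε * π ^ 2) * (((n + 1 : ℕ) : ℝ) ^ 2)⁻¹ := by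
        unfold gamman
        field_simp

lemma abs_Gn_le {α ε lm l : ℝ} {n : ℕ} (hg : 0 < gn α ε lm l n) (hb : 0 < bn lm l n)
    {t : ℝ} (ht : 0 ≤ t) : |Gn α ε lm l n t| ≤ (gn α ε lm l n)⁻¹ := by
  unfold Gn
  split_ifs with hhyp hdeg
  · have hω : 0 < √(gn α ε lm l n ^ 2 - bn lm l n) := sqrt_pos.2 (by linarith)
    have hωg : √(gn α ε lm l n ^ 2 - bn lm l n) < gn α ε lm l n := (sqrt_lt' hg).2 (by linarith)
    rw [abs_of_nonneg (by positivity)]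
    exact exp_neg_mul_mul_sinh_div_le hω hωg ht
  · rw [abs_of_nonneg (by positivity)]
    exact mul_exp_neg_mul_le_inv hg t
  · exact abs_exp_neg_mul_mul_sin_div_le hg ht

@[fun_prop]
lemma continuous_Gn (α ε lm l : ℝ) (n : ℕ) : Continuous (Gn α ε lm l n) := by
  unfold Gn
  split_ifs <;> fun_prop

lemma abs_mul_sin_mul_sin_le (a x y : ℝ) : |a * sin x * sin y| ≤ |a| := by
  rw [abs_mul, abs_mul]
  calc |a| * |sin x| * |sin y| ≤ |a| * 1 * 1 := by
        gcongr
        exacts [abs_sin_le_one x, abs_sin_le_one y]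
    _ = |a| := by ring

theorem stmt2_general (α ε lm l : ℝ) (hα : 0 < α) (hε : 0 < ε) (hl : 0 < l) :
    TendstoUniformlyOn
      (fun (N : ℕ) (p : ℝ × ℝ × ℝ) => ∑ n ∈ Finset.range N,
        Gn α ε lm l (n + 1) p.2.2 * Real.sin (gamman l (n + 1) * p.2.1) *
          Real.sin (gamman l (n + 1) * p.1))
      (fun p : ℝ × ℝ × ℝ => ∑' n : ℕ,
        Gn α ε lm l (n + 1) p.2.2 * Real.sin (gamman l (n + 1) * p.2.1) *
          Real.sin (gamman l (n + 1) * p.1))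
      Filter.atTop (Set.Icc 0 l ×ˢ Set.Icc 0 l ×ˢ Set.Ici 0) ∧
    ContinuousOn (fun p : ℝ × ℝ × ℝ => GreenG α ε lm l p.1 p.2.1 p.2.2)
      (Set.Icc 0 l ×ˢ Set.Icc 0 l ×ˢ Set.Ici 0) := by
  have hu := summable_inv_gn_succ hα hε lm hl.ne'
  have hM : ∀ n (p : ℝ × ℝ × ℝ), p ∈ Set.Icc 0 l ×ˢ Set.Icc 0 l ×ˢ Set.Ici 0 →
      ‖Gn α ε lm l (n + 1) p.2.2 * sin (gamman l (n + 1) * p.2.1) *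
        sin (gamman l (n + 1) * p.1)‖ ≤ (gn α ε lm l (n + 1))⁻¹ := fun n p hp =>
    (abs_mul_sin_mul_sin_le _ _ _).trans
      (abs_Gn_le (gn_pos hα hε.le lm l _) (bn_pos hl.ne' (Nat.succ_ne_zero n)) hp.2.2)
  refine ⟨tendstoUniformlyOn_tsum_nat hu hM, ?_⟩
  have hseries := continuousOn_tsum (fun n => Continuous.continuousOn (by fun_prop)) hu hM
  exact (Continuous.continuousOn (by fun_prop)).mul hseries

/-- Assuming g_n² ≠ b_n for every n ≥ 1, the series
Σ_{n≥1} G_n(t) sin(γ_n ξ) sin(γ_n x) converges uniformly on [0,l] × [0,l] × [0,∞);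
consequently G(x,ξ,t) is continuous on [0,l] × [0,l] × [0,∞). -/
theorem stmt2 (α ε lm l : ℝ) (hα : 0 < α) (hε : 0 < ε) (hlm : 0 < lm) (hl : 0 < l)
    (hnd : ∀ n : ℕ, 1 ≤ n → (gn α ε lm l n) ^ 2 ≠ bn lm l n) :
    TendstoUniformlyOn
      (fun (N : ℕ) (p : ℝ × ℝ × ℝ) => ∑ n ∈ Finset.range N,
        Gn α ε lm l (n + 1) p.2.2 * Real.sin (gamman l (n + 1) * p.2.1) *
          Real.sin (gamman l (n + 1) * p.1))
      (fun p : ℝ × ℝ × ℝ => ∑' n : ℕ,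
        Gn α ε lm l (n + 1) p.2.2 * Real.sin (gamman l (n + 1) * p.2.1) *
          Real.sin (gamman l (n + 1) * p.1))
      Filter.atTop (Set.Icc 0 l ×ˢ Set.Icc 0 l ×ˢ Set.Ici 0) ∧
    ContinuousOn (fun p : ℝ × ℝ × ℝ => GreenG α ε lm l p.1 p.2.1 p.2.2)
      (Set.Icc 0 l ×ˢ Set.Icc 0 l ×ˢ Set.Ici 0) :=
  stmt2_general α ε lm l hα hε hl
end

section
/- For every real constant h and every ξ ≠ h − 1, define y(ξ) = (1 − (ξ − h))/(1 + (ξ − h)) and U(ξ) = 4 arctan(y(ξ) + √(y(ξ)² + 1)). Then U'(ξ) = sin U(ξ) − 1 at every such ξ (the case γ = 1). -/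
/-!
With `s = √(y² + 1)` and `a = y + s` one has `1 + a² = 2 s a` and `1 - a² = -2 y a`. Hence
`U = 4 arctan a` satisfies `U' = 2 y' / s²` and `sin U = 4 a (1 - a²) / (1 + a²)² = -2 y / s²`,
so `U' = sin U - 1` exactly when `y` solves the Riccati equation `y' = -(1 + y)² / 2`,
which the Möbius function `y = (1 - t) / (1 + t)` does.
-/

open Real

theorem Real.sin_four_mul_arctan (a : ℝ) :
    sin (4 * arctan a) = 4 * a * (1 - a ^ 2) / (1 + a ^ 2) ^ 2 := by
  have hsc : sin (arctan a) * cos (arctan a) = a / (1 + a ^ 2) := by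
    rw [sin_arctan, cos_arctan, div_mul_div_comm, mul_one, ← sq,
      sq_sqrt (by positivity)]
  have hcos : cos (2 * arctan a) = (1 - a ^ 2) / (1 + a ^ 2) := by
    rw [cos_two_mul, cos_sq_arctan]
    field_simp
    ring
  rw [show 4 * arctan a = 2 * (2 * arctan a) by ring, sin_two_mul, sin_two_mul, hcos,
    mul_assoc 2 (sin _), hsc]
  field_simp
  ring

section AddSqrt

variable (y : ℝ)

lemma sq_sqrt_sq_add_one : √(y ^ 2 + 1) ^ 2 = y ^ 2 + 1 := sq_sqrt (by positivity)

lemma sqrt_sq_add_one_pos : 0 < √(y ^ 2 + 1) := sqrt_pos.mpr (by positivity)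

lemma add_sqrt_sq_add_one_pos : 0 < y + √(y ^ 2 + 1) := by
  nlinarith [sq_sqrt_sq_add_one y, sqrt_sq_add_one_pos y]

lemma one_add_sq_add_sqrt_sq_add_one :
    1 + (y + √(y ^ 2 + 1)) ^ 2 = 2 * √(y ^ 2 + 1) * (y + √(y ^ 2 + 1)) := by
  linear_combination -sq_sqrt_sq_add_one y

lemma one_sub_sq_add_sqrt_sq_add_one :
    1 - (y + √(y ^ 2 + 1)) ^ 2 = -2 * y * (y + √(y ^ 2 + 1)) := by
  linear_combination -sq_sqrt_sq_add_one y

lemma sin_four_mul_arctan_add_sqrt_sq_add_one :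
    sin (4 * arctan (y + √(y ^ 2 + 1))) = -2 * y / (y ^ 2 + 1) := by
  have ha := (add_sqrt_sq_add_one_pos y).ne'
  rw [sin_four_mul_arctan, one_sub_sq_add_sqrt_sq_add_one,
    one_add_sq_add_sqrt_sq_add_one]
  field_simp
  linear_combination 4 * y * sq_sqrt_sq_add_one y

end AddSqrt

section Deriv

variable {f : ℝ → ℝ} {f' x : ℝ}

lemma HasDerivAt.add_sqrt_sq_add_one (hf : HasDerivAt f f' x) :
    HasDerivAt (fun x => f x + √(f x ^ 2 + 1))
      (f' * (f x + √(f x ^ 2 + 1)) / √(f x ^ 2 + 1)) x := by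
  refine (hf.add ((hf.fun_pow 2).add_const 1 |>.sqrt (by positivity))).congr_deriv ?_
  field_simp
  ring

lemma HasDerivAt.four_mul_arctan_add_sqrt_sq_add_one (hf : HasDerivAt f f' x) :
    HasDerivAt (fun x => 4 * Real.arctan (f x + √(f x ^ 2 + 1))) (2 * f' / (f x ^ 2 + 1)) x := by
  have ha := (add_sqrt_sq_add_one_pos (f x)).ne'
  refine (hf.add_sqrt_sq_add_one.arctan.const_mul 4).congr_deriv ?_
  rw [one_add_sq_add_sqrt_sq_add_one]
  field_simp
  linear_combination -4 * f' * sq_sqrt_sq_add_one (f x)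

theorem HasDerivAt.four_mul_arctan_add_sqrt_sq_add_one_of_riccati
    (hf : HasDerivAt f (-(1 + f x) ^ 2 / 2) x) :
    HasDerivAt (fun x => 4 * Real.arctan (f x + √(f x ^ 2 + 1)))
      (Real.sin (4 * Real.arctan (f x + √(f x ^ 2 + 1))) - 1) x := by
  refine hf.four_mul_arctan_add_sqrt_sq_add_one.congr_deriv ?_
  rw [sin_four_mul_arctan_add_sqrt_sq_add_one]
  field_simp
  ring

end Deriv

lemma hasDerivAt_one_sub_div_one_add (h t : ℝ) (ht : t ≠ h - 1) :
    HasDerivAt (fun ξ => (1 - (ξ - h)) / (1 + (ξ - h)))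
      (-(1 + (1 - (t - h)) / (1 + (t - h))) ^ 2 / 2) t := by
  have hne : 1 + (t - h) ≠ 0 := fun h0 => ht (by linarith)
  refine ((hasDerivAt_id' t |>.sub_const h |>.const_sub 1).fun_div
    (hasDerivAt_id' t |>.sub_const h |>.const_add 1) hne).congr_deriv ?_
  field_simp
  ring

/-- For every real h and ξ ≠ h − 1, with y(ξ) = (1 − (ξ − h))/(1 + (ξ − h))
and U(ξ) = 4 arctan(y(ξ) + √(y(ξ)² + 1)), one has U'(ξ) = sin U(ξ) − 1 (case γ = 1). -/
theorem stmt13 (h : ℝ) (y U : ℝ → ℝ)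
    (hy : ∀ ξ : ℝ, y ξ = (1 - (ξ - h)) / (1 + (ξ - h)))
    (hU : ∀ ξ : ℝ, U ξ = 4 * Real.arctan (y ξ + Real.sqrt ((y ξ) ^ 2 + 1))) :
    ∀ ξ : ℝ, ξ ≠ h - 1 → HasDerivAt U (Real.sin (U ξ) - 1) ξ := by
  intro ξ hξ
  rw [show U = _ from funext hU, show y = _ from funext hy]
  exact (hasDerivAt_one_sub_div_one_add h ξ hξ).four_mul_arctan_add_sqrt_sq_add_one_of_riccati
end

section
/- Let 0 < γ < 1, A = √(1 − γ²), β = 1 + A, and let h be a real constant. On any open interval where 1 − h e^{Aξ} ≠ 0, the function y(ξ) = (h (γ/β) e^{Aξ} − β/γ)/(1 − h e^{Aξ}) satisfies the Riccati equation y'(ξ) = −(y(ξ) + (γ/2)(1 + y(ξ)²)); consequently U(ξ) = 4 arctan(y(ξ) + √(y(ξ)² + 1)) satisfies U'(ξ) = sin U(ξ) − γ on that interval. -/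
/-!
The function `y` is a Möbius transform of `w = h e^{Aξ}` sending `w = 0, ∞` to the roots
`-β/γ, -γ/β` of `y + (γ/2)(1 + y²)`; with rate `A = (γ/2)(β/γ - γ/β)` such a transform solves
`y' = -(γ/2)(y + γ/β)(y + β/γ)`, which is the Riccati equation.
For `U`, note `y + √(y² + 1) = e^{arsinh y}` and `2 arctan eˢ = gd s + π/2` (Gudermannian),
with `gd (arsinh y) = arctan y`; so `U = 2 arctan y + π`. Hence `sin U = -2y/(1 + y²)` and
`U' = 2y'/(1 + y²) = sin U - γ`.
-/

open Real

theorem two_mul_arctan_add_sqrt_sq_add_one (x : ℝ) :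
    2 * arctan (x + √(x ^ 2 + 1)) = arctan x + π / 2 := by
  set s := √(x ^ 2 + 1)
  have hs : s ^ 2 = x ^ 2 + 1 := sq_sqrt (by positivity)
  have ht : 0 < x + s := by nlinarith [sqrt_nonneg (x ^ 2 + 1)]
  have ht_inv : (x + s)⁻¹ = s - x := inv_eq_of_mul_eq_one_right (by linear_combination hs)
  have hsum : arctan (x + s) + arctan (s - x) = π / 2 := by
    rw [← ht_inv, arctan_inv_of_pos ht]; ring
  have hdiff : arctan (x + s) - arctan (s - x) = arctan x := by
    rw [sub_eq_add_neg, ← arctan_neg, arctan_add (by nlinarith)]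
    congr 1
    rw [show 1 - (x + s) * -(s - x) = 2 by linear_combination hs]
    ring
  linarith

theorem sin_two_mul_arctan (x : ℝ) : sin (2 * arctan x) = 2 * x / (1 + x ^ 2) := by
  have h : √(1 + x ^ 2) ^ 2 = 1 + x ^ 2 := sq_sqrt (by positivity)
  rw [sin_two_mul, sin_arctan, cos_arctan]
  field_simp
  rw [h]

theorem hasDerivAt_moebius_exp_riccati {y : ℝ → ℝ} {a k p q h ξ : ℝ} (hk : k = a * (q - p))
    (hy : ∀ t, y t = (h * p * exp (k * t) - q) / (1 - h * exp (k * t)))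
    (hξ : 1 - h * exp (k * ξ) ≠ 0) :
    HasDerivAt y (-(a * ((y ξ + p) * (y ξ + q)))) ξ := by
  have hexp : HasDerivAt (fun t => exp (k * t)) (exp (k * ξ) * k) ξ := by
    simpa using ((hasDerivAt_id ξ).const_mul k).exp
  obtain rfl : y = _ := funext hy
  refine (((hexp.const_mul (h * p)).sub_const q).div
    ((hexp.const_mul h).const_sub 1) hξ).congr_deriv ?_
  subst hk
  field_simp
  ring

theorem add_mul_one_add_sq_eq_mul {γ : ℝ} (hγ : γ ≠ 0) (hγ1 : γ ^ 2 ≤ 1) (y : ℝ) :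
    y + γ / 2 * (1 + y ^ 2) =
      γ / 2 * ((y + γ / (1 + √(1 - γ ^ 2))) * (y + (1 + √(1 - γ ^ 2)) / γ)) := by
  have hA : √(1 - γ ^ 2) ^ 2 = 1 - γ ^ 2 := sq_sqrt (by linarith)
  have hβ : 1 + √(1 - γ ^ 2) ≠ 0 := by positivity
  field_simp
  linear_combination -y * hA

theorem sqrt_one_sub_sq_eq_half_mul_sub {γ : ℝ} (hγ : γ ≠ 0) (hγ1 : γ ^ 2 ≤ 1) :
    √(1 - γ ^ 2) = γ / 2 * ((1 + √(1 - γ ^ 2)) / γ - γ / (1 + √(1 - γ ^ 2))) := by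
  have hA : √(1 - γ ^ 2) ^ 2 = 1 - γ ^ 2 := sq_sqrt (by linarith)
  have hβ : 1 + √(1 - γ ^ 2) ≠ 0 := by positivity
  field_simp
  linear_combination hA

theorem hasDerivAt_four_mul_arctan_of_riccati {y U : ℝ → ℝ} {γ ξ : ℝ}
    (hy : HasDerivAt y (-(y ξ + γ / 2 * (1 + y ξ ^ 2))) ξ)
    (hU : ∀ t, U t = 4 * arctan (y t + √(y t ^ 2 + 1))) :
    HasDerivAt U (sin (U ξ) - γ) ξ := by
  have hU_eq : U = fun t => 2 * arctan (y t) + π := funext fun t => by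
    rw [hU, show (4 : ℝ) = 2 * 2 by norm_num, mul_assoc, two_mul_arctan_add_sqrt_sq_add_one]
    ring
  subst hU_eq
  refine ((hy.arctan.const_mul 2).add_const π).congr_deriv ?_
  rw [sin_add_pi, sin_two_mul_arctan]
  field_simp
  ring

/-- Let 0 < γ < 1, A = √(1 − γ²), β = 1 + A, h ∈ ℝ. On any open interval
where 1 − h e^{Aξ} ≠ 0, the function y(ξ) = (h(γ/β)e^{Aξ} − β/γ)/(1 − h e^{Aξ}) satisfies
the Riccati equation y' = −(y + (γ/2)(1 + y²)); consequently
U(ξ) = 4 arctan(y(ξ) + √(y(ξ)² + 1)) satisfies U' = sin U − γ on that interval. -/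
theorem stmt14 (γ : ℝ) (hγ0 : 0 < γ) (hγ1 : γ < 1) (h : ℝ) (A β : ℝ)
    (hA : A = Real.sqrt (1 - γ ^ 2)) (hβ : β = 1 + A)
    (a b : ℝ) (hne : ∀ ξ ∈ Set.Ioo a b, 1 - h * Real.exp (A * ξ) ≠ 0)
    (y U : ℝ → ℝ)
    (hy : ∀ ξ : ℝ, y ξ = (h * (γ / β) * Real.exp (A * ξ) - β / γ) /
      (1 - h * Real.exp (A * ξ)))
    (hU : ∀ ξ : ℝ, U ξ = 4 * Real.arctan (y ξ + Real.sqrt ((y ξ) ^ 2 + 1))) :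
    ∀ ξ ∈ Set.Ioo a b,
      HasDerivAt y (-(y ξ + γ / 2 * (1 + (y ξ) ^ 2))) ξ ∧
      HasDerivAt U (Real.sin (U ξ) - γ) ξ := by
  intro ξ hξ
  subst hA hβ
  have hγ_ne : γ ≠ 0 := hγ0.ne'
  have hγ_sq : γ ^ 2 ≤ 1 := by nlinarith
  have hy' : HasDerivAt y (-(y ξ + γ / 2 * (1 + y ξ ^ 2))) ξ := by
    rw [add_mul_one_add_sq_eq_mul hγ_ne hγ_sq]
    exact hasDerivAt_moebius_exp_riccati (sqrt_one_sub_sq_eq_half_mul_sub hγ_ne hγ_sq) hy (hne ξ hξ)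
  exact ⟨hy', hasDerivAt_four_mul_arctan_of_riccati hy' hU⟩
end

section
/- Define ξ(x,t) = (x − t)/(α − λ), z(x,t) = e^{−ξ(x,t)} + √(e^{−2ξ(x,t)} + 1), and u₀(x,t) = 4 arctan(z(x,t)). Then u₀ satisfies the semilinear hyperbolic equation u₀,xx − u₀,tt − α u₀,t − λ u₀,x = sin u₀ at every point (x,t) ∈ ℝ² (the case γ = 0). -/
/-!
`u₀` is the travelling wave `f ((x - t) / c)` with `c = α - λ` and `f = kinkProfile`. For any
travelling wave of speed one `u_xx = u_tt`, and the first-order terms give `(α - λ) / c · f'`,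
so it remains to see `f' = sin f`. Writing `f = 4 arctan z`, this is the Riccati equation
`z' = z (1 - z²) / (1 + z²)`, which holds for `z = g + s` with `g = e^{-ξ}`, `s = √(g² + 1)`
because `1 + z² = 2 s z` and `1 - z² = -2 g z`. Since `deriv` commutes with affine changes of
variable without any differentiability hypothesis, the travelling-wave identity holds for every `f`.
-/

open Real

lemma deriv_comp_sub_div_const (f : ℝ → ℝ) (a c x : ℝ) :
    deriv (fun y => f ((y - a) / c)) x = deriv f ((x - a) / c) / c := by
  simp only [div_eq_inv_mul]
  rw [deriv_comp_sub_const (f := fun s => f (c⁻¹ * s)), deriv_comp_mul_left, smul_eq_mul]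

lemma deriv_comp_const_sub_div_const (f : ℝ → ℝ) (a c x : ℝ) :
    deriv (fun y => f ((a - y) / c)) x = -(deriv f ((a - x) / c) / c) := by
  simp only [div_eq_inv_mul]
  rw [deriv_comp_const_sub (f := fun s => f (c⁻¹ * s)), deriv_comp_mul_left, smul_eq_mul]

theorem travellingWave_operator_eq (f : ℝ → ℝ) (α lm c : ℝ) (u : ℝ → ℝ → ℝ)
    (hu : ∀ x t, u x t = f ((x - t) / c)) (x t : ℝ) :
    deriv (fun y => deriv (fun y' => u y' t) y) x
        - deriv (fun s => deriv (fun s' => u x s') s) t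
        - α * deriv (fun s => u x s) t
        - lm * deriv (fun y => u y t) x
      = (α - lm) / c * deriv f ((x - t) / c) := by
  simp only [hu, deriv_comp_sub_div_const, deriv_comp_const_sub_div_const, deriv.fun_neg,
    deriv_div_const]
  ring

lemma sin_four_arctan (z : ℝ) :
    sin (4 * arctan z) = 4 * z * (1 - z ^ 2) / (1 + z ^ 2) ^ 2 := by
  have hs : sqrt (1 + z ^ 2) ^ 2 = 1 + z ^ 2 := sq_sqrt (by positivity)
  have hs0 : sqrt (1 + z ^ 2) ≠ 0 := by positivity
  rw [show 4 * arctan z = 2 * (2 * arctan z) by ring, sin_two_mul, sin_two_mul, cos_two_mul,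
    sin_arctan, cos_arctan]
  field_simp
  rw [show sqrt (1 + z ^ 2) ^ 4 = (sqrt (1 + z ^ 2) ^ 2) ^ 2 by ring, hs]
  ring

lemma hasDerivAt_four_arctan_of_riccati {z : ℝ → ℝ} {ξ : ℝ}
    (hz : HasDerivAt z (z ξ * (1 - z ξ ^ 2) / (1 + z ξ ^ 2)) ξ) :
    HasDerivAt (fun ξ => 4 * arctan (z ξ)) (sin (4 * arctan (z ξ))) ξ := by
  refine (hz.arctan.const_mul 4).congr_deriv ?_
  rw [sin_four_arctan]
  field_simp

noncomputable def kinkProfile (ξ : ℝ) : ℝ := 4 * arctan (exp (-ξ) + sqrt (exp (-2 * ξ) + 1))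

lemma hasDerivAt_kinkProfile (ξ : ℝ) : HasDerivAt kinkProfile (sin (kinkProfile ξ)) ξ := by
  have hg2 : exp (-2 * ξ) = exp (-ξ) ^ 2 := by rw [← exp_nat_mul]; ring_nf
  obtain ⟨g, hg⟩ : ∃ g, exp (-ξ) = g := ⟨_, rfl⟩
  obtain ⟨s, hs⟩ : ∃ s, sqrt (g ^ 2 + 1) = s := ⟨_, rfl⟩
  have hs2 : s ^ 2 = g ^ 2 + 1 := hs ▸ sq_sqrt (by positivity)
  have hs0 : 0 < s := hs ▸ sqrt_pos.mpr (by positivity)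
  have hgs : 0 < g + s := by rw [← hg]; positivity
  have hexp : HasDerivAt (fun x => exp (-x)) (-g) ξ := by
    simpa [hg] using (hasDerivAt_neg ξ).exp
  have hsqrt : HasDerivAt (fun x => sqrt (exp (-2 * x) + 1)) (g ^ 2 * (-2) / (2 * s)) ξ := by
    convert (((hasDerivAt_id' ξ).const_mul (-2)).exp.add_const 1).sqrt (by positivity) using 1
    rw [hg2, hg, hs]
    ring
  have hz : HasDerivAt (fun x => exp (-x) + sqrt (exp (-2 * x) + 1))
      ((g + s) * (1 - (g + s) ^ 2) / (1 + (g + s) ^ 2)) ξ := by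
    refine (hexp.add hsqrt).congr_deriv ?_
    rw [show 1 + (g + s) ^ 2 = 2 * s * (g + s) by linear_combination -hs2,
      show 1 - (g + s) ^ 2 = -(2 * g * (g + s)) by linear_combination -hs2]
    field_simp
    ring
  have hzξ : exp (-ξ) + sqrt (exp (-2 * ξ) + 1) = g + s := by rw [hg2, hg, hs]
  rw [← hzξ] at hz
  exact hasDerivAt_four_arctan_of_riccati hz

/-- With ξ(x,t) = (x − t)/(α − λ),
z(x,t) = e^{−ξ(x,t)} + √(e^{−2ξ(x,t)} + 1) and u₀(x,t) = 4 arctan(z(x,t)),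
u₀ satisfies u₀,xx − u₀,tt − α u₀,t − λ u₀,x = sin u₀ on ℝ² (case γ = 0). -/
theorem stmt15 (α lm : ℝ) (hne : α ≠ lm)
    (ξ z u₀ : ℝ → ℝ → ℝ)
    (hξ : ∀ x t : ℝ, ξ x t = (x - t) / (α - lm))
    (hz : ∀ x t : ℝ, z x t = Real.exp (-ξ x t) + Real.sqrt (Real.exp (-2 * ξ x t) + 1))
    (hu : ∀ x t : ℝ, u₀ x t = 4 * Real.arctan (z x t)) :
    ∀ x t : ℝ,
      deriv (fun y => deriv (fun y' => u₀ y' t) y) x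
        - deriv (fun s => deriv (fun s' => u₀ x s') s) t
        - α * deriv (fun s => u₀ x s) t
        - lm * deriv (fun y => u₀ y t) x
      = Real.sin (u₀ x t) := by
  have hkink : ∀ x t, u₀ x t = kinkProfile ((x - t) / (α - lm)) := fun x t => by
    rw [hu, hz, hξ, kinkProfile]
  intro x t
  rw [travellingWave_operator_eq kinkProfile α lm (α - lm) u₀ hkink,
    div_self (sub_ne_zero.mpr hne), one_mul, (hasDerivAt_kinkProfile _).deriv, hkink]
end
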